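/- arXiv:1410.7030 — 2 statements merged into one kernel-verified Lean document; each statement's English description precedes it below -/
import Mathlib

section
/- Let G be a finite simple graph with exactly 8 edges, exactly 12 vertices of odd degree, and no isolated vertices. Then every connected component of G contains exactly 2, exactly 4, or exactly 6 vertices of odd degree. -/
/-!
Fix a component `C` with `k` odd-degree vertices, `n` vertices and `e` edges. The handshake lemma
inside each component shows that `k` is even and that every component `C'` has at most `2 e(C')`
odd-degree vertices; summing over the components other than `C` gives `12 - k ≤ 2 (8 - e)`.
As `C` is connected, `k ≤ n ≤ e + 1`, whence `k ≤ 6`. If `k = 0`, every vertex of `C` has even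
positive degree, so `C` has at least three vertices and `e ≥ n ≥ 3`, contradicting
`2 e ≤ 4 + k`.
-/

open Finset

theorem Finset.card_filter_odd_le_sum {ι : Type*} (s : Finset ι) (f : ι → ℕ) :
    #{x ∈ s | Odd (f x)} ≤ ∑ x ∈ s, f x := by
  rw [card_filter]
  gcongr with x
  split_ifs with h
  · exact h.pos
  · exact Nat.zero_le _

namespace SimpleGraph
variable {V : Type*} {G : SimpleGraph V}

theorem ncard_neighborSet_eq_degree (v : V) [Fintype (G.neighborSet v)] :
    (G.neighborSet v).ncard = G.degree v := by
  rw [Set.ncard_eq_toFinset_card', ← card_neighborFinset_eq_degree, neighborFinset]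

namespace ConnectedComponent

theorem neighborSet_subset_supp (C : G.ConnectedComponent) {v : V} (hv : v ∈ C.supp) :
    G.neighborSet v ⊆ C.supp := by
  intro w hw
  rw [mem_supp_iff] at hv ⊢
  exact (connectedComponentMk_eq_of_adj hw).symm.trans hv

variable [Fintype V] [DecidableEq V] [DecidableRel G.Adj]

theorem sum_sum_supp {M : Type*} [AddCommMonoid M] (f : V → M) :
    ∑ C : G.ConnectedComponent, ∑ v ∈ C.supp.toFinset, f v = ∑ v, f v := by
  classical
  rw [← Finset.sum_fiberwise univ G.connectedComponentMk f]
  refine Fintype.sum_congr _ _ fun C => Finset.sum_congr ?_ fun _ _ => rfl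
  ext v
  simp [mem_supp_iff]

theorem degree_lt_card_supp (v : V) :
    G.degree v < #(G.connectedComponentMk v).supp.toFinset := by
  rw [← card_neighborFinset_eq_degree, Nat.lt_iff_add_one_le, ← card_insert_of_notMem
    (notMem_neighborFinset_self G v)]
  refine card_le_card fun w hw => ?_
  rw [Set.mem_toFinset]
  rcases mem_insert.mp hw with rfl | hw
  · exact connectedComponentMk_mem
  · exact neighborSet_subset_supp _ connectedComponentMk_mem ((mem_neighborFinset G v w).mp hw)

variable (C : G.ConnectedComponent)

theorem sum_degrees_supp_eq_twice_card_edgeSet :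
    ∑ v ∈ C.supp.toFinset, G.degree v = 2 * Nat.card C.toSimpleGraph.edgeSet := by
  rw [Finset.sum_subtype _ (fun _ => Set.mem_toFinset)]
  classical
  rw [Nat.card_eq_fintype_card, ← edgeFinset_card, ← sum_degrees_eq_twice_card_edges]
  -- `↥C` and `↥C.supp` are the same type, but with different `Fintype` instances here.
  convert Fintype.sum_congr _ _ fun v : C =>
    (degree_induce_of_neighborSet_subset (C.neighborSet_subset_supp v.2)).symm <;> rfl

theorem card_supp_le_card_edgeSet_add_one :
    #C.supp.toFinset ≤ Nat.card C.toSimpleGraph.edgeSet + 1 := by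
  rw [Set.toFinset_card, ← Nat.card_eq_fintype_card]
  exact C.connected_toSimpleGraph.card_vert_le_card_edgeSet_add_one

theorem even_card_odd_degree_supp : Even #{v ∈ C.supp.toFinset | Odd (G.degree v)} := by
  rw [← even_sum_iff_even_card_odd, sum_degrees_supp_eq_twice_card_edgeSet]
  exact even_two_mul _

theorem card_odd_degree_supp_le_two_mul_card_edgeSet :
    #{v ∈ C.supp.toFinset | Odd (G.degree v)} ≤ 2 * Nat.card C.toSimpleGraph.edgeSet :=
  C.sum_degrees_supp_eq_twice_card_edgeSet ▸ card_filter_odd_le_sum _ _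

theorem three_le_card_edgeSet_of_two_le_degree (h : ∀ v ∈ C.supp, 2 ≤ G.degree v) :
    3 ≤ Nat.card C.toSimpleGraph.edgeSet := by
  obtain ⟨v, hv⟩ := C.nonempty_supp
  have hlt : G.degree v < #C.supp.toFinset := (C.mem_supp_iff v).mp hv ▸ degree_lt_card_supp v
  have hsum : #C.supp.toFinset • 2 ≤ ∑ w ∈ C.supp.toFinset, G.degree w :=
    card_nsmul_le_sum _ _ _ fun w hw => h w (Set.mem_toFinset.mp hw)
  rw [sum_degrees_supp_eq_twice_card_edgeSet, smul_eq_mul] at hsum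
  have := h v hv
  omega

theorem sum_card_edgeSet_toSimpleGraph :
    ∑ C : G.ConnectedComponent, Nat.card C.toSimpleGraph.edgeSet = #G.edgeFinset := by
  have h := sum_sum_supp (G := G) fun v => G.degree v
  simp only [sum_degrees_supp_eq_twice_card_edgeSet, ← mul_sum,
    sum_degrees_eq_twice_card_edges] at h
  omega

theorem sum_card_odd_degree_supp :
    ∑ C : G.ConnectedComponent, #{v ∈ C.supp.toFinset | Odd (G.degree v)} =
      #{v | Odd (G.degree v)} := by
  simp only [card_filter]
  exact sum_sum_supp _

theorem two_mul_card_edgeSet_add_card_odd_degree_le :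
    2 * Nat.card C.toSimpleGraph.edgeSet + #{v | Odd (G.degree v)} ≤
      2 * #G.edgeFinset + #{v ∈ C.supp.toFinset | Odd (G.degree v)} := by
  have hle := single_le_sum (f := fun C : G.ConnectedComponent =>
    2 * Nat.card C.toSimpleGraph.edgeSet - #{v ∈ C.supp.toFinset | Odd (G.degree v)})
    (fun _ _ => Nat.zero_le _) (mem_univ C)
  rw [sum_tsub_distrib _ fun C _ => C.card_odd_degree_supp_le_two_mul_card_edgeSet, ← mul_sum,
    sum_card_edgeSet_toSimpleGraph, sum_card_odd_degree_supp] at hle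
  have hodd : #{v | Odd (G.degree v)} ≤ 2 * #G.edgeFinset := by
    rw [← sum_degrees_eq_twice_card_edges]
    exact card_filter_odd_le_sum _ _
  have := C.card_odd_degree_supp_le_two_mul_card_edgeSet
  omega

end ConnectedComponent
end SimpleGraph

open SimpleGraph in
/-- In a finite simple graph with exactly 8 edges, exactly 12 vertices of odd
degree, and no isolated vertices, every connected component contains exactly
2, exactly 4, or exactly 6 vertices of odd degree. -/
theorem component_odd_vertices_two_four_or_six
    {V : Type} [Finite V] (G : SimpleGraph V)
    (hedges : G.edgeSet.ncard = 8)
    (hodd : {v : V | Odd ((G.neighborSet v).ncard)}.ncard = 12)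
    (hiso : ∀ v : V, (G.neighborSet v).ncard ≠ 0) :
    ∀ c : G.ConnectedComponent,
      {v : V | G.connectedComponentMk v = c ∧ Odd ((G.neighborSet v).ncard)}.ncard = 2 ∨
      {v : V | G.connectedComponentMk v = c ∧ Odd ((G.neighborSet v).ncard)}.ncard = 4 ∨
      {v : V | G.connectedComponentMk v = c ∧ Odd ((G.neighborSet v).ncard)}.ncard = 6 := by
  classical
  cases nonempty_fintype V
  intro C
  simp only [ncard_neighborSet_eq_degree, ← C.mem_supp_iff] at hodd hiso ⊢
  rw [← coe_edgeFinset, Set.ncard_coe_finset] at hedges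
  rw [Set.ncard_eq_toFinset_card', Set.toFinset_ofPred] at hodd
  have hodd_C : {v | v ∈ C.supp ∧ Odd (G.degree v)}.ncard =
      #{v ∈ C.supp.toFinset | Odd (G.degree v)} := by
    rw [Set.ncard_eq_toFinset_card']
    congr 1; ext; simp
  rw [hodd_C]
  have h_no_odd : #{v ∈ C.supp.toFinset | Odd (G.degree v)} = 0 →
      3 ≤ Nat.card C.toSimpleGraph.edgeSet := by
    intro h0
    refine C.three_le_card_edgeSet_of_two_le_degree fun v hv => ?_
    have h_not_odd : ¬ Odd (G.degree v) :=
      filter_eq_empty_iff.mp (card_eq_zero.mp h0) (Set.mem_toFinset.mpr hv)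
    have := hiso v
    grind
  obtain ⟨m, hm⟩ := C.even_card_odd_degree_supp
  have := card_filter_le C.supp.toFinset fun v => Odd (G.degree v)
  have := C.card_supp_le_card_edgeSet_add_one
  have := C.two_mul_card_edgeSet_add_card_odd_degree_le
  omega
end

section
/- Let G be a finite simple graph with exactly 7 edges, exactly 12 vertices of odd degree, and no isolated vertices. Then either G consists of exactly one connected component isomorphic to the path P_3 and exactly five components isomorphic to the path P_2, or G consists of exactly one connected component isomorphic to the star K_{1,3} and exactly four components isomorphic to the path P_2. -/
/-!
Write every degree as `d = 2 ⌊d/2⌋ + d % 2`. The handshake lemma gives `∑ d = 14`, and the odd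
vertices contribute `∑ d % 2 = 12`, so `∑ ⌊d/2⌋ = 1`. With no isolated vertices this forces every
vertex but one, `w`, to be a leaf, and `deg w ∈ {2, 3}`. Then each component avoiding `w` is a
single edge, the component of `w` is the star on `w` and its neighbours (`P₃` or `K_{1,3}`), and
counting vertices component by component leaves exactly `7 - deg w` single edges.
-/

open Finset

theorem exists_eq_one_forall_ne_eq_zero_of_sum_eq_one {ι : Type*} [Fintype ι] {g : ι → ℕ}
    (h : ∑ i, g i = 1) : ∃ w, g w = 1 ∧ ∀ i ≠ w, g i = 0 := by
  obtain ⟨w, hw⟩ : ∃ w, g w ≠ 0 := by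
    by_contra! h0
    simp [h0] at h
  refine ⟨w, ?_, fun i hi => ?_⟩
  · have := single_le_sum (fun i _ => Nat.zero_le (g i)) (mem_univ w)
    omega
  · have := add_le_sum (f := g) (fun i _ => Nat.zero_le _) (mem_univ i) (mem_univ w) hi
    omega

theorem sum_mod_two_eq_card_filter_odd {ι : Type*} (s : Finset ι) (f : ι → ℕ) :
    ∑ i ∈ s, f i % 2 = #{i ∈ s | Odd (f i)} := by
  rw [card_filter]
  refine sum_congr rfl fun i _ => ?_
  split_ifs with h
  · exact Nat.odd_iff.mp h
  · exact Nat.not_odd_iff.mp h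

theorem exists_eq_two_or_eq_three_forall_ne_eq_one {ι : Type*} [Fintype ι] (f : ι → ℕ)
    (hpos : ∀ i, f i ≠ 0) (hsum : ∑ i, f i = #{i | Odd (f i)} + 2) :
    ∃ w, (f w = 2 ∨ f w = 3) ∧ ∀ i ≠ w, f i = 1 := by
  have hhalf : ∑ i, f i / 2 = 1 := by
    have : ∑ i, f i = ∑ i, (2 * (f i / 2) + f i % 2) :=
      sum_congr rfl fun i _ => (Nat.div_add_mod (f i) 2).symm
    rw [sum_add_distrib, ← mul_sum, sum_mod_two_eq_card_filter_odd] at this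
    omega
  obtain ⟨w, hw, hne⟩ := exists_eq_one_forall_ne_eq_zero_of_sum_eq_one hhalf
  exact ⟨w, by omega, fun i hi => by have := hne i hi; have := hpos i; omega⟩

namespace SimpleGraph

variable {V : Type*} {G : SimpleGraph V}

theorem ConnectedComponent.supp_eq_of_forall_adj_mem {S : Set V} {v : V} (hv : v ∈ S)
    (hS : ∀ x ∈ S, ∀ y, G.Adj x y → y ∈ S) (hreach : ∀ x ∈ S, G.Reachable v x) :
    (G.connectedComponentMk v).supp = S := by
  ext u
  rw [ConnectedComponent.mem_supp_iff, ConnectedComponent.eq]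
  refine ⟨fun h => ?_, fun h => (hreach u h).symm⟩
  by_contra hu
  obtain ⟨d, -, hd, hd'⟩ := h.symm.some.exists_boundary_dart S hv hu
  exact hd' (hS _ hd _ d.adj)

theorem nonempty_starGraph_iso {W : Type*} [Finite V] [Finite W] (r : V) (r' : W)
    (h : Nat.card V = Nat.card W) : Nonempty (starGraph r ≃g starGraph r') := by
  classical
  obtain ⟨e⟩ := Finite.card_eq.mp h
  let e' := e.trans (Equiv.swap (e r) r')
  have he' : r' = e' r := by simp [e']
  exact ⟨⟨e', by simp [he', e'.injective.eq_iff]⟩⟩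

theorem completeBipartiteGraph_eq_starGraph (α β : Type*) [Unique α] :
    completeBipartiteGraph α β = starGraph (.inl default) := by
  ext (a | b) (a' | b') <;> simp [Unique.eq_default]

theorem pathGraph_three_eq_starGraph : pathGraph 3 = starGraph 1 := by
  ext u v
  rw [pathGraph_adj, starGraph_adj]
  fin_cases u <;> fin_cases v <;> decide

theorem nonempty_induce_pair_iso_pathGraph_two {x y : V} (hxy : G.Adj x y) :
    Nonempty (G.induce {x, y} ≃g pathGraph 2) := by
  obtain ⟨e⟩ := Finite.card_eq.mp (by simp [Set.ncard_pair hxy.ne] :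
    Nat.card ({x, y} : Set V) = Nat.card (Fin 2))
  rw [pathGraph_two_eq_top, induce_eq_top.mpr (isClique_pair.mpr fun _ => hxy)]
  exact ⟨Iso.completeGraph e⟩

section Degree

variable [Fintype V] [DecidableRel G.Adj] {w : V}

theorem eq_of_adj_of_degree_eq_one {v x y : V} (h : G.degree v = 1) (hx : G.Adj v x)
    (hy : G.Adj v y) : x = y :=
  (degree_eq_one_iff_existsUnique_adj.mp h).unique hx hy

theorem supp_connectedComponentMk_eq_pair {x y : V} (hxy : G.Adj x y) (hx : G.degree x = 1)
    (hy : G.degree y = 1) : (G.connectedComponentMk x).supp = {x, y} := by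
  refine ConnectedComponent.supp_eq_of_forall_adj_mem (by simp) ?_ ?_
  · rintro z (rfl | rfl) u hu
    · exact .inr (eq_of_adj_of_degree_eq_one hx hu hxy)
    · exact .inl (eq_of_adj_of_degree_eq_one hy hu hxy.symm)
  · rintro z (rfl | rfl)
    exacts [.rfl, hxy.reachable]

theorem supp_connectedComponentMk_eq_insert_neighborSet
    (hleaf : ∀ v ∈ G.neighborSet w, G.degree v = 1) :
    (G.connectedComponentMk w).supp = insert w (G.neighborSet w) := by
  refine ConnectedComponent.supp_eq_of_forall_adj_mem (Set.mem_insert w _) ?_ ?_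
  · rintro z (rfl | hz) u hu
    · exact .inr hu
    · exact .inl (eq_of_adj_of_degree_eq_one (hleaf z hz) hu (G.adj_symm hz))
  · rintro z (rfl | hz)
    exacts [.rfl, Adj.reachable hz]

theorem natCard_supp_connectedComponentMk_eq_degree_add_one
    (hleaf : ∀ v ∈ G.neighborSet w, G.degree v = 1) :
    Nat.card (G.connectedComponentMk w).supp = G.degree w + 1 := by
  rw [supp_connectedComponentMk_eq_insert_neighborSet hleaf, Nat.card_coe_set_eq,
    Set.ncard_insert_of_notMem G.notMem_neighborSet_self, ← Nat.card_coe_set_eq,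
    Nat.card_eq_fintype_card, card_neighborSet_eq_degree]

theorem induce_supp_connectedComponentMk_eq_starGraph
    (hleaf : ∀ v ∈ G.neighborSet w, G.degree v = 1) :
    G.induce (G.connectedComponentMk w).supp = starGraph ⟨w, rfl⟩ := by
  ext ⟨x, hx⟩ ⟨y, hy⟩
  rw [supp_connectedComponentMk_eq_insert_neighborSet hleaf] at hx hy
  simp only [Set.mem_insert_iff, mem_neighborSet] at hx hy
  simp only [comap_adj, Function.Embedding.subtype_apply, starGraph_adj, ne_eq, Subtype.ext_iff]
  rcases hx with rfl | hx <;> rcases hy with rfl | hy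
  · simp
  · simp [hy, hy.ne]
  · simp [hx.symm, hx.ne']
  · have hxy : ¬ G.Adj x y := fun h => hy.ne (eq_of_adj_of_degree_eq_one (hleaf x hx) hx.symm h)
    simp [hxy, hx.ne', hy.ne']

theorem exists_supp_eq_pair_of_ne_connectedComponentMk (hleaf : ∀ v ≠ w, G.degree v = 1)
    {c : G.ConnectedComponent} (hc : c ≠ G.connectedComponentMk w) :
    ∃ x y, G.Adj x y ∧ c.supp = {x, y} := by
  induction c using ConnectedComponent.ind with | h v => ?_
  have hvw : v ≠ w := by rintro rfl; exact hc rfl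
  obtain ⟨u, hu⟩ := (G.degree_pos_iff_exists_adj v).mp (by rw [hleaf v hvw]; exact one_pos)
  have huw : u ≠ w := by
    rintro rfl
    exact hc (ConnectedComponent.eq.mpr hu.reachable)
  exact ⟨v, u, hu, supp_connectedComponentMk_eq_pair hu (hleaf v hvw) (hleaf u huw)⟩

/-- Count the vertices component by component, `|V| = (deg w + 1) + 2 · (#components - 1)`, and
compare with the handshake lemma, `2 |E| = deg w + (|V| - 1)`. -/
theorem ncard_edgeSet_eq_degree_add_ncard_ne_connectedComponentMk
    (hleaf : ∀ v ≠ w, G.degree v = 1) :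
    G.edgeSet.ncard =
      G.degree w + {c : G.ConnectedComponent | c ≠ G.connectedComponentMk w}.ncard := by
  classical
  set cw := G.connectedComponentMk w
  have hV : Nat.card V = ∑ c : G.ConnectedComponent, Nat.card c.supp := by
    rw [← Nat.card_congr (Equiv.sigmaFiberEquiv G.connectedComponentMk), Nat.card_sigma]
    rfl
  have hpair : ∀ c ∈ univ.erase cw, Nat.card c.supp = 2 := fun c hc => by
    obtain ⟨x, y, hxy, hsupp⟩ :=
      exists_supp_eq_pair_of_ne_connectedComponentMk hleaf (ne_of_mem_erase hc)
    rw [hsupp, Nat.card_coe_set_eq, Set.ncard_pair hxy.ne]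
  rw [← add_sum_erase _ _ (mem_univ cw), sum_congr rfl hpair, sum_const, smul_eq_mul,
    natCard_supp_connectedComponentMk_eq_degree_add_one fun v hv =>
      hleaf v (G.ne_of_adj hv).symm] at hV
  have hE : 2 * G.edgeSet.ncard = ∑ v, G.degree v := by
    rw [sum_degrees_eq_twice_card_edges, ← coe_edgeFinset, Set.ncard_coe_finset]
  rw [← add_sum_erase _ _ (mem_univ w), sum_congr rfl fun v hv => hleaf v (ne_of_mem_erase hv),
    sum_const, card_erase_of_mem (mem_univ w), smul_eq_mul, mul_one, card_univ] at hE
  have hcw : {c | c ≠ cw}.ncard = #(univ.erase cw) := by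
    rw [← Set.ncard_coe_finset]
    congr 1
    ext
    simp
  rw [Nat.card_eq_fintype_card] at hV
  omega

theorem components_starGraph_and_pathGraph_two_of_forall_ne_degree_eq_one
    (hleaf : ∀ v ≠ w, G.degree v = 1) (hw : G.degree w ≠ 1) {W : Type*} [Finite W] (r : W)
    (hW : Nat.card W = G.degree w + 1) :
    {c : G.ConnectedComponent | Nonempty (G.induce c.supp ≃g starGraph r)}.ncard = 1 ∧
      {c : G.ConnectedComponent | Nonempty (G.induce c.supp ≃g pathGraph 2)}.ncard =
        G.edgeSet.ncard - G.degree w ∧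
      ∀ c : G.ConnectedComponent,
        Nonempty (G.induce c.supp ≃g starGraph r) ∨ Nonempty (G.induce c.supp ≃g pathGraph 2) := by
  have hleaf' : ∀ v ∈ G.neighborSet w, G.degree v = 1 :=
    fun v hv => hleaf v (G.ne_of_adj hv).symm
  have hcard := natCard_supp_connectedComponentMk_eq_degree_add_one hleaf'
  have hstar : ∀ c, Nonempty (G.induce c.supp ≃g starGraph r) ↔ c = G.connectedComponentMk w := by
    refine fun c => ⟨fun ⟨e⟩ => ?_, ?_⟩
    · by_contra hc
      obtain ⟨x, y, hxy, hsupp⟩ := exists_supp_eq_pair_of_ne_connectedComponentMk hleaf hc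
      have := Nat.card_congr e.toEquiv
      rw [hsupp, Nat.card_coe_set_eq, Set.ncard_pair hxy.ne, hW] at this
      omega
    · rintro rfl
      rw [induce_supp_connectedComponentMk_eq_starGraph hleaf']
      exact nonempty_starGraph_iso _ _ (by rw [hcard, hW])
  have hpair : ∀ c, Nonempty (G.induce c.supp ≃g pathGraph 2) ↔ c ≠ G.connectedComponentMk w := by
    refine fun c => ⟨?_, fun hc => ?_⟩
    · rintro ⟨e⟩ rfl
      have := Nat.card_congr e.toEquiv
      rw [hcard, Nat.card_eq_fintype_card, Fintype.card_fin] at this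
      omega
    · obtain ⟨x, y, hxy, hsupp⟩ := exists_supp_eq_pair_of_ne_connectedComponentMk hleaf hc
      rw [hsupp]
      exact nonempty_induce_pair_iso_pathGraph_two hxy
  refine ⟨?_, ?_, fun c => ?_⟩
  · rw [Set.ext hstar, Set.ofPred_eq_eq_singleton, Set.ncard_singleton]
  · rw [Set.ext hpair, ncard_edgeSet_eq_degree_add_ncard_ne_connectedComponentMk hleaf,
      Nat.add_sub_cancel_left]
  · rw [hstar, hpair]
    exact em _

end Degree

end SimpleGraph

/-- A finite simple graph with exactly 7 edges, exactly 12 vertices of odd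
degree, and no isolated vertices consists either of exactly one connected
component isomorphic to the path P₃ and exactly five components isomorphic to
the path P₂, or of exactly one connected component isomorphic to the star
K_{1,3} and exactly four components isomorphic to the path P₂. -/
theorem components_P3_with_5P2_or_K13_with_4P2
    {V : Type} [Finite V] (G : SimpleGraph V)
    (hedges : G.edgeSet.ncard = 7)
    (hodd : {v : V | Odd ((G.neighborSet v).ncard)}.ncard = 12)
    (hiso : ∀ v : V, (G.neighborSet v).ncard ≠ 0) :
    ({c : G.ConnectedComponent |
        Nonempty (G.induce c.supp ≃g SimpleGraph.pathGraph 3)}.ncard = 1 ∧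
      {c : G.ConnectedComponent |
        Nonempty (G.induce c.supp ≃g SimpleGraph.pathGraph 2)}.ncard = 5 ∧
      (∀ c : G.ConnectedComponent,
        Nonempty (G.induce c.supp ≃g SimpleGraph.pathGraph 3) ∨
        Nonempty (G.induce c.supp ≃g SimpleGraph.pathGraph 2))) ∨
    ({c : G.ConnectedComponent |
        Nonempty (G.induce c.supp ≃g completeBipartiteGraph (Fin 1) (Fin 3))}.ncard = 1 ∧
      {c : G.ConnectedComponent |
        Nonempty (G.induce c.supp ≃g SimpleGraph.pathGraph 2)}.ncard = 4 ∧
      (∀ c : G.ConnectedComponent,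
        Nonempty (G.induce c.supp ≃g completeBipartiteGraph (Fin 1) (Fin 3)) ∨
        Nonempty (G.induce c.supp ≃g SimpleGraph.pathGraph 2))) := by
  classical
  cases nonempty_fintype V
  have hdeg : ∀ v, (G.neighborSet v).ncard = G.degree v := fun v => by
    rw [← Nat.card_coe_set_eq, Nat.card_eq_fintype_card, G.card_neighborSet_eq_degree]
  simp only [hdeg] at hodd hiso
  have hoddCard : #{v | Odd (G.degree v)} = 12 := by
    rw [← hodd, ← Set.ncard_coe_finset, coe_filter_univ]
  have hsum : ∑ v, G.degree v = #{v | Odd (G.degree v)} + 2 := by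
    rw [G.sum_degrees_eq_twice_card_edges, hoddCard, ← Set.ncard_coe_finset, G.coe_edgeFinset,
      hedges]
  obtain ⟨w, hw | hw, hleaf⟩ := exists_eq_two_or_eq_three_forall_ne_eq_one _ hiso hsum
  · have := SimpleGraph.components_starGraph_and_pathGraph_two_of_forall_ne_degree_eq_one hleaf
      (by omega) (1 : Fin 3) (by simp [hw])
    rw [← SimpleGraph.pathGraph_three_eq_starGraph, hedges, hw] at this
    exact .inl this
  · have := SimpleGraph.components_starGraph_and_pathGraph_two_of_forall_ne_degree_eq_one hleaf
      (by omega) (.inl default : Fin 1 ⊕ Fin 3) (by simp [hw])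
    rw [← SimpleGraph.completeBipartiteGraph_eq_starGraph, hedges, hw] at this
    exact .inr this
end
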